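/- Let q be a prime power and let k, m, t be positive integers with m + t ≤ k. Then there exists a (K,F,Q,S) placement delivery array with K = [k, t]_q, F = [k, m+t]_q, Q = [k, m+t]_q − [k−t, m]_q, and S = [k, m]_q. -/

import Mathlib

open Finset

/-- A `(K, F, Q, S)` placement delivery array: an `F × K` array with entries in
`[S] ∪ {*}` (where `none` plays the role of `*`) satisfying conditions C1, C2, C3. -/
def IsPDA {K F S : ℕ} (Q : ℕ) (P : Fin F → Fin K → Option (Fin S)) : Prop :=
  -- C1: the symbol `*` appears exactly `Q` times in each column
  (∀ k : Fin K, (univ.filter fun j : Fin F => P j k = none).card = Q) ∧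
  -- C2: each integer `s ∈ [S]` occurs at least once in the array
  (∀ s : Fin S, ∃ j k, P j k = some s) ∧
  -- C3
  (∀ (j₁ j₂ : Fin F) (k₁ k₂ : Fin K) (s : Fin S), (j₁, k₁) ≠ (j₂, k₂) →
    P j₁ k₁ = some s → P j₂ k₂ = some s →
    j₁ ≠ j₂ ∧ k₁ ≠ k₂ ∧ P j₁ k₂ = none ∧ P j₂ k₁ = none)

/-- There exists a `(K, F, Q, S)` placement delivery array. -/
def ExistsPDA (K F Q S : ℕ) : Prop :=
  ∃ P : Fin F → Fin K → Option (Fin S), IsPDA Q P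

/-- The Gaussian (q-)binomial coefficient
`[ℓ, m]_q = ∏_{i=0}^{m-1} (q^{ℓ-i} - 1) / (q^{m-i} - 1)`. -/
def gaussBinom (q ℓ m : ℕ) : ℕ :=
  (∏ i ∈ Finset.range m, (q ^ (ℓ - i) - 1)) / ∏ i ∈ Finset.range m, (q ^ (m - i) - 1)

open Module Submodule

set_option linter.unusedSectionVars false

lemma gauss_den_pos {q : ℕ} (hq : 2 ≤ q) (d : ℕ) :
    0 < ∏ i ∈ Finset.range d, (q ^ (d - i) - 1) := by
  apply Finset.prod_pos
  intro i hi
  have h1 : 1 ≤ d - i := by have := Finset.mem_range.1 hi; omega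
  have : 2 ≤ q ^ (d - i) := le_trans hq (le_self_pow (by omega) (by omega))
  omega

lemma prod_shift_id (x m t : ℕ) :
    (∏ i ∈ Finset.range t, (x ^ (m + t - i) - 1)) *
        ∏ i ∈ Finset.range m, (x ^ (m - i) - 1) =
      (∏ i ∈ Finset.range m, (x ^ (m + t - i) - 1)) *
        ∏ i ∈ Finset.range t, (x ^ (t - i) - 1) := by
  have h1 := Finset.prod_range_add (fun i => x ^ (m + t - i) - 1) t m
  have h2 := Finset.prod_range_add (fun i => x ^ (m + t - i) - 1) m t
  have e1 : ∀ i ∈ Finset.range m, x ^ (m + t - (t + i)) - 1 = x ^ (m - i) - 1 := by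
    intro i hi; congr 2; omega
  have e2 : ∀ i ∈ Finset.range t, x ^ (m + t - (m + i)) - 1 = x ^ (t - i) - 1 := by
    intro i hi; congr 2; omega
  rw [Finset.prod_congr rfl e1] at h1
  rw [Finset.prod_congr rfl e2] at h2
  rw [← h1, ← h2, add_comm t m]


lemma prod_fac {q X d : ℕ} (hq : 0 < q) (hd : d ≤ X) :
    ∏ i : Fin d, (q ^ X - q ^ i.val) =
      q ^ (∑ i ∈ Finset.range d, i) * ∏ i ∈ Finset.range d, (q ^ (X - i) - 1) := by
  rw [Fin.prod_univ_eq_prod_range (fun i => q ^ X - q ^ i)]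
  rw [← Finset.prod_pow_eq_pow_sum, ← Finset.prod_mul_distrib]
  apply Finset.prod_congr rfl
  intro i hi
  have hiX : i ≤ X := by have := Finset.mem_range.1 hi; omega
  rw [Nat.mul_sub, mul_one, ← pow_add, Nat.add_sub_cancel' hiX]

section
variable {𝔽 : Type} [Field 𝔽] [Fintype 𝔽]
variable {E : Type} [AddCommGroup E] [Module 𝔽 E] [FiniteDimensional 𝔽 E] [Finite E]

local notation "q" => Fintype.card 𝔽
set_option linter.unusedSectionVars false

noncomputable def tupleEquiv (W : Submodule 𝔽 E) (d : ℕ) :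
    {f : Fin d → E // LinearIndependent 𝔽 f ∧ Set.range f ⊆ W} ≃
      {g : Fin d → W // LinearIndependent 𝔽 g} where
  toFun f := ⟨fun i => ⟨f.1 i, f.2.2 (Set.mem_range_self i)⟩, by
    apply LinearIndependent.of_comp W.subtype
    convert f.2.1
    rfl⟩
  invFun g := ⟨fun i => (g.1 i : E), by
    refine ⟨g.2.map' W.subtype (ker_subtype W), ?_⟩
    rintro x ⟨i, rfl⟩; exact (g.1 i).2⟩
  left_inv f := by ext i; rfl
  right_inv g := by ext i; rfl

lemma card_tuples_in (W : Submodule 𝔽 E) {d : ℕ} (hW : finrank 𝔽 W = d) :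
    Nat.card {f : Fin d → E // LinearIndependent 𝔽 f ∧ Set.range f ⊆ W} =
      ∏ i : Fin d, (q ^ d - q ^ i.val) := by
  rw [Nat.card_congr (tupleEquiv W d), card_linearIndependent (hW.ge), hW]

lemma span_eq_of_tuple {W : Submodule 𝔽 E} {d : ℕ} (hW : finrank 𝔽 W = d)
    {f : Fin d → E} (hf : LinearIndependent 𝔽 f) (hr : Set.range f ⊆ W) :
    Submodule.span 𝔽 (Set.range f) = W := by
  apply Submodule.eq_of_le_of_finrank_eq ((Submodule.span_le).2 hr)
  rw [hW, finrank_span_eq_card hf, Fintype.card_fin]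

lemma card_subspaces_mul_aux (d : ℕ) :
    Nat.card {W : Submodule 𝔽 E // finrank 𝔽 W = d} * ∏ i : Fin d, (q ^ d - q ^ i.val) =
      ∏ i : Fin d, (q ^ (finrank 𝔽 E) - q ^ i.val) := by
  classical
  by_cases hd : d ≤ finrank 𝔽 E
  · rw [← card_linearIndependent (K := 𝔽) (V := E) hd]
    set σ : {f : Fin d → E // LinearIndependent 𝔽 f} →
        {W : Submodule 𝔽 E // finrank 𝔽 W = d} := fun f =>
      ⟨Submodule.span 𝔽 (Set.range f.1), by
        rw [finrank_span_eq_card f.2, Fintype.card_fin]⟩ with hσ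
    have e1 := Equiv.sigmaFiberEquiv σ
    haveI : Finite (Submodule 𝔽 E) := Finite.of_injective _ SetLike.coe_injective
    have e2 : ∀ W : {W : Submodule 𝔽 E // finrank 𝔽 W = d},
        {f : {f : Fin d → E // LinearIndependent 𝔽 f} // σ f = W} ≃
          {f : Fin d → E // LinearIndependent 𝔽 f ∧ Set.range f ⊆ W.1} := by
      intro W
      refine ⟨fun x => ⟨x.1.1, x.1.2, ?_⟩,
        fun f => ⟨⟨f.1, f.2.1⟩, Subtype.ext (span_eq_of_tuple W.2 f.2.1 f.2.2)⟩,
        fun x => by ext; rfl, fun f => by ext; rfl⟩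
      have : Submodule.span 𝔽 (Set.range x.1.1) = W.1 := congrArg Subtype.val x.2
      rw [← this]; exact Submodule.subset_span
    haveI : Fintype {W : Submodule 𝔽 E // finrank 𝔽 W = d} := Fintype.ofFinite _
    have key : Nat.card {f : Fin d → E // LinearIndependent 𝔽 f} =
        ∑ W : {W : Submodule 𝔽 E // finrank 𝔽 W = d},
          Nat.card {f : Fin d → E // LinearIndependent 𝔽 f ∧ Set.range f ⊆ W.1} := by
      rw [Nat.card_congr ((e1.symm).trans (Equiv.sigmaCongrRight e2))]
      haveI : ∀ W : {W : Submodule 𝔽 E // finrank 𝔽 W = d},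
          Fintype {f : Fin d → E // LinearIndependent 𝔽 f ∧ Set.range f ⊆ W.1} :=
        fun _ => Fintype.ofFinite _
      simp [Nat.card_eq_fintype_card, Fintype.card_sigma]
    rw [key, Finset.sum_congr rfl (fun W _ => card_tuples_in W.1 W.2)]
    simp [Finset.sum_const, Nat.card_eq_fintype_card, mul_comm]
  · push_neg at hd
    haveI : IsEmpty {W : Submodule 𝔽 E // finrank 𝔽 W = d} := by
      refine ⟨fun W => ?_⟩
      have h1 : finrank 𝔽 W.1 < d := lt_of_le_of_lt (Submodule.finrank_le W.1) hd
      exact absurd W.2 h1.ne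
    rw [Nat.card_of_isEmpty, zero_mul]
    refine (Finset.prod_eq_zero (Finset.mem_univ (⟨finrank 𝔽 E, hd⟩ : Fin d)) ?_).symm
    simp

lemma card_subspaces_mul (d : ℕ) (hd : d ≤ finrank 𝔽 E) :
    Nat.card {W : Submodule 𝔽 E // finrank 𝔽 W = d} *
      ∏ i ∈ Finset.range d, (q ^ (d - i) - 1) =
      ∏ i ∈ Finset.range d, (q ^ (finrank 𝔽 E - i) - 1) := by
  have hq2 : 2 ≤ q := Fintype.one_lt_card
  have h := card_subspaces_mul_aux (𝔽 := 𝔽) (E := E) d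
  rw [prod_fac (by omega : 0 < q) (le_refl d), prod_fac (by omega : 0 < q) hd] at h
  apply Nat.eq_of_mul_eq_mul_left (pow_pos (by omega : 0 < q) (∑ i ∈ Finset.range d, i))
  calc q ^ (∑ i ∈ Finset.range d, i) *
        (Nat.card {W : Submodule 𝔽 E // finrank 𝔽 W = d} *
          ∏ i ∈ Finset.range d, (q ^ (d - i) - 1))
      = Nat.card {W : Submodule 𝔽 E // finrank 𝔽 W = d} *
        (q ^ (∑ i ∈ Finset.range d, i) * ∏ i ∈ Finset.range d, (q ^ (d - i) - 1)) := by ring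
    _ = q ^ (∑ i ∈ Finset.range d, i) * ∏ i ∈ Finset.range d, (q ^ (finrank 𝔽 E - i) - 1) := h

lemma card_subspaces_eq_gauss (d : ℕ) (hd : d ≤ finrank 𝔽 E) :
    Nat.card {W : Submodule 𝔽 E // finrank 𝔽 W = d} = gaussBinom q (finrank 𝔽 E) d := by
  have hq2 : 2 ≤ q := Fintype.one_lt_card
  exact (Nat.div_eq_of_eq_mul_left (gauss_den_pos hq2 d) (card_subspaces_mul d hd).symm).symm


lemma card_linearMap' (A B : Type) [AddCommGroup A] [Module 𝔽 A] [FiniteDimensional 𝔽 A]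
    [AddCommGroup B] [Module 𝔽 B] [FiniteDimensional 𝔽 B] :
    Nat.card (A →ₗ[𝔽] B) = q ^ (finrank 𝔽 A * finrank 𝔽 B) := by
  classical
  rw [Nat.card_congr (LinearMap.toMatrix (finBasis 𝔽 A) (finBasis 𝔽 B)).toEquiv]
  show Nat.card (Fin (finrank 𝔽 B) → Fin (finrank 𝔽 A) → 𝔽) = _
  rw [Nat.card_fun, Nat.card_fun, Nat.card_eq_fintype_card (α := 𝔽)]
  simp [← pow_mul, mul_comm]

lemma card_isCompl (p : Submodule 𝔽 E) :
    Nat.card {c : Submodule 𝔽 E // IsCompl p c} =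
      q ^ (finrank 𝔽 p * (finrank 𝔽 E - finrank 𝔽 p)) := by
  obtain ⟨C, hC⟩ := Submodule.exists_isCompl p
  have hrk : finrank 𝔽 p + finrank 𝔽 C = finrank 𝔽 E :=
    Submodule.finrank_add_eq_of_isCompl hC
  have e := (prodEquivOfIsCompl p C hC)
  have Φ : {f : E →ₗ[𝔽] p // ∀ x : p, f x = x} ≃ (C →ₗ[𝔽] p) := by
    refine ⟨fun f => f.1 ∘ₗ C.subtype,
      fun g => ⟨(LinearMap.coprod LinearMap.id g) ∘ₗ
        (prodEquivOfIsCompl p C hC).symm.toLinearMap, fun x => by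
          simp [Submodule.prodEquivOfIsCompl_symm_apply_left]⟩, ?_, ?_⟩
    · rintro ⟨f, hf⟩
      apply Subtype.ext
      apply LinearMap.ext
      intro x
      obtain ⟨⟨a, b⟩, rfl⟩ := (prodEquivOfIsCompl p C hC).surjective x
      simp [Submodule.coe_prodEquivOfIsCompl', hf a]
    · intro g
      apply LinearMap.ext
      intro y
      simp [Submodule.prodEquivOfIsCompl_symm_apply_right]
  rw [Nat.card_congr ((p.isComplEquivProj).trans Φ), card_linearMap']
  rw [mul_comm (finrank 𝔽 ↥C), ← hrk]
  congr 2
  omega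


lemma finrank_sup_of_inf_bot {V B : Submodule 𝔽 E} (h : V ⊓ B = ⊥) :
    finrank 𝔽 ↥(V ⊔ B) = finrank 𝔽 V + finrank 𝔽 B := by
  have := Submodule.finrank_sup_add_finrank_inf_eq V B
  rw [h, finrank_bot] at this
  omega

lemma exists_supmodule (B : Submodule 𝔽 E) (r : ℕ) (h1 : finrank 𝔽 B ≤ r)
    (h2 : r ≤ finrank 𝔽 E) : ∃ W : Submodule 𝔽 E, B ≤ W ∧ finrank 𝔽 W = r := by
  induction r, h1 using Nat.le_induction with
  | base => exact ⟨B, le_rfl, rfl⟩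
  | succ n hn ih =>
    obtain ⟨W, hBW, hW⟩ := ih (by omega)
    have hWne : W ≠ ⊤ := by
      intro h
      rw [h, finrank_top] at hW
      omega
    obtain ⟨x, hx⟩ : ∃ x, x ∉ W := by
      by_contra h
      push_neg at h
      exact hWne (eq_top_iff.2 fun y _ => h y)
    have hx0 : x ≠ 0 := fun h => hx (h ▸ W.zero_mem)
    have hinf : W ⊓ (𝔽 ∙ x) = ⊥ := by
      rw [eq_bot_iff]
      rintro y ⟨hyW, hySpan⟩
      obtain ⟨c, rfl⟩ := Submodule.mem_span_singleton.1 hySpan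
      rcases eq_or_ne c 0 with rfl | hc
      · simp
      · exact absurd (by simpa [smul_smul, inv_mul_cancel₀ hc] using
          Submodule.smul_mem W c⁻¹ hyW) hx
    refine ⟨W ⊔ (𝔽 ∙ x), le_trans hBW le_sup_left, ?_⟩
    rw [finrank_sup_of_inf_bot hinf, hW, finrank_span_singleton hx0]

noncomputable def subEquiv (W : Submodule 𝔽 E) (d : ℕ) :
    {V : Submodule 𝔽 E // finrank 𝔽 V = d ∧ V ≤ W} ≃
      {V' : Submodule 𝔽 W // finrank 𝔽 V' = d} where
  toFun V := ⟨V.1.comap W.subtype, by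
    rw [(Submodule.comapSubtypeEquivOfLe V.2.2).finrank_eq]; exact V.2.1⟩
  invFun V' := ⟨V'.1.map W.subtype, by
    refine ⟨?_, Submodule.map_subtype_le W V'.1⟩
    rw [← (Submodule.equivMapOfInjective W.subtype W.injective_subtype V'.1).finrank_eq]
    exact V'.2⟩
  left_inv V := by
    apply Subtype.ext
    show (V.1.comap W.subtype).map W.subtype = V.1
    rw [Submodule.map_comap_subtype]
    exact inf_eq_right.2 V.2.2
  right_inv V' := by
    apply Subtype.ext
    show (V'.1.map W.subtype).comap W.subtype = V'.1
    rw [Submodule.comap_map_eq, Submodule.ker_subtype, sup_bot_eq]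

lemma finrank_map_mkQ (V U : Submodule 𝔽 E) (h : V ≤ U) :
    finrank 𝔽 U = finrank 𝔽 (U.map V.mkQ) + finrank 𝔽 V := by
  have h1 := LinearMap.finrank_range_add_finrank_ker (V.mkQ ∘ₗ U.subtype)
  rw [LinearMap.ker_comp, Submodule.ker_mkQ, LinearMap.range_comp,
    Submodule.range_subtype, (Submodule.comapSubtypeEquivOfLe h).finrank_eq] at h1
  omega

noncomputable def quotEquiv (V : Submodule 𝔽 E) (r : ℕ) (hr : finrank 𝔽 V ≤ r) :
    {W' : Submodule 𝔽 (E ⧸ V) // finrank 𝔽 W' = r - finrank 𝔽 V} ≃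
      {W : Submodule 𝔽 E // finrank 𝔽 W = r ∧ V ≤ W} where
  toFun W' := by
    refine ⟨W'.1.comap V.mkQ, ?_, fun x hx => ?_⟩
    · have hle : V ≤ W'.1.comap V.mkQ := fun x hx => by
        simp [Submodule.mem_comap, (Submodule.Quotient.mk_eq_zero V).2 hx]
      have hmc : (W'.1.comap V.mkQ).map V.mkQ = W'.1 := by
        rw [Submodule.map_comap_eq, Submodule.range_mkQ, top_inf_eq]
      have := finrank_map_mkQ V (W'.1.comap V.mkQ) hle
      rw [hmc, W'.2] at this
      omega
    · simp [Submodule.mem_comap, (Submodule.Quotient.mk_eq_zero V).2 hx]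
  invFun W := ⟨W.1.map V.mkQ, by
    have := finrank_map_mkQ V W.1 W.2.2
    rw [W.2.1] at this
    omega⟩
  left_inv W' := by
    apply Subtype.ext
    show (W'.1.comap V.mkQ).map V.mkQ = W'.1
    rw [Submodule.map_comap_eq, Submodule.range_mkQ, top_inf_eq]
  right_inv W := by
    apply Subtype.ext
    show (W.1.map V.mkQ).comap V.mkQ = W.1
    rw [Submodule.comap_map_eq, Submodule.ker_mkQ]
    exact sup_eq_left.2 W.2.2

lemma card_sub_eq (W : Submodule 𝔽 E) (d : ℕ) (hd : d ≤ finrank 𝔽 W) :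
    Nat.card {V : Submodule 𝔽 E // finrank 𝔽 V = d ∧ V ≤ W} =
      gaussBinom q (finrank 𝔽 W) d := by
  rw [Nat.card_congr (subEquiv W d), card_subspaces_eq_gauss d hd]

lemma card_sup_eq (V : Submodule 𝔽 E) (r : ℕ) (h1 : finrank 𝔽 V ≤ r)
    (h2 : r ≤ finrank 𝔽 E) :
    Nat.card {W : Submodule 𝔽 E // finrank 𝔽 W = r ∧ V ≤ W} =
      gaussBinom q (finrank 𝔽 E - finrank 𝔽 V) (r - finrank 𝔽 V) := by
  haveI : Finite (E ⧸ V) := Finite.of_surjective _ (Submodule.mkQ_surjective V)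
  have hq := Submodule.finrank_quotient_add_finrank V
  have hfin : finrank 𝔽 (E ⧸ V) = finrank 𝔽 E - finrank 𝔽 V := by omega
  rw [← Nat.card_congr (quotEquiv V r h1),
    card_subspaces_eq_gauss (r - finrank 𝔽 V) (by omega), hfin]

lemma card_compl_in (W V : Submodule 𝔽 E) (hVW : V ≤ W) :
    Nat.card {B : Submodule 𝔽 E // B ≤ W ∧ V ⊓ B = ⊥ ∧ V ⊔ B = W} =
      q ^ (finrank 𝔽 V * (finrank 𝔽 W - finrank 𝔽 V)) := by
  set V₀ : Submodule 𝔽 W := V.comap W.subtype with hV₀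
  have hmapV : V₀.map W.subtype = V := by
    rw [hV₀, Submodule.map_comap_subtype]
    exact inf_eq_right.2 hVW
  have eqv : {c : Submodule 𝔽 W // IsCompl V₀ c} ≃
      {B : Submodule 𝔽 E // B ≤ W ∧ V ⊓ B = ⊥ ∧ V ⊔ B = W} := by
    refine ⟨fun c => ⟨c.1.map W.subtype, Submodule.map_subtype_le W c.1, ?_, ?_⟩,
      fun B => ⟨B.1.comap W.subtype, ?_, ?_⟩, ?_, ?_⟩
    · rw [← hmapV, ← Submodule.map_inf _ W.injective_subtype,
        disjoint_iff.1 c.2.disjoint, Submodule.map_bot]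
    · rw [← hmapV, ← Submodule.map_sup, codisjoint_iff.1 c.2.codisjoint,
        Submodule.map_subtype_top]
    · rw [disjoint_iff, hV₀, ← Submodule.comap_inf, B.2.2.1, Submodule.comap_bot,
        Submodule.ker_subtype]
    · rw [codisjoint_iff, eq_top_iff]
      rintro ⟨x, hxW⟩ -
      have hx2 : x ∈ V ⊔ B.1 := by rw [B.2.2.2]; exact hxW
      obtain ⟨v, hv, b, hb, rfl⟩ := Submodule.mem_sup.1 hx2
      exact Submodule.mem_sup.2 ⟨⟨v, hVW hv⟩, Submodule.mem_comap.2 hv,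
        ⟨b, B.2.1 hb⟩, Submodule.mem_comap.2 hb, rfl⟩
    · intro c
      apply Subtype.ext
      show (c.1.map W.subtype).comap W.subtype = c.1
      rw [Submodule.comap_map_eq, Submodule.ker_subtype, sup_bot_eq]
    · intro B
      apply Subtype.ext
      show (B.1.comap W.subtype).map W.subtype = B.1
      rw [Submodule.map_comap_subtype]
      exact inf_eq_right.2 B.2.1
  rw [← Nat.card_congr eqv, card_isCompl V₀,
    (Submodule.comapSubtypeEquivOfLe hVW).finrank_eq]


lemma card_compl_deg (V : Submodule 𝔽 E) {d : ℕ} (hV : finrank 𝔽 V = d) :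
    Nat.card {B : Submodule 𝔽 E // finrank 𝔽 B = finrank 𝔽 E - d ∧ V ⊓ B = ⊥} =
      q ^ (d * (finrank 𝔽 E - d)) := by
  have hdN : d ≤ finrank 𝔽 E := hV ▸ Submodule.finrank_le V
  have eqv : {B : Submodule 𝔽 E // B ≤ ⊤ ∧ V ⊓ B = ⊥ ∧ V ⊔ B = ⊤} ≃
      {B : Submodule 𝔽 E // finrank 𝔽 B = finrank 𝔽 E - d ∧ V ⊓ B = ⊥} := by
    refine ⟨fun B => ⟨B.1, ?_, B.2.2.1⟩, fun B => ⟨B.1, le_top, B.2.2, ?_⟩, ?_, ?_⟩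
    · have h1 : finrank 𝔽 ↥(V ⊔ B.1) = finrank 𝔽 V + finrank 𝔽 B.1 :=
        finrank_sup_of_inf_bot B.2.2.1
      rw [B.2.2.2, finrank_top] at h1
      omega
    · apply Submodule.eq_top_of_finrank_eq
      rw [finrank_sup_of_inf_bot B.2.2, hV, B.2.1]
      omega
    · intro B; rfl
    · intro B; rfl
  rw [← Nat.card_congr eqv, card_compl_in ⊤ V le_top, hV, finrank_top]

lemma card_subspaces_symm (m t : ℕ) (hE : finrank 𝔽 E = m + t) :
    Nat.card {V : Submodule 𝔽 E // finrank 𝔽 V = t} =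
      Nat.card {B : Submodule 𝔽 E // finrank 𝔽 B = m} := by
  have hq2 : 2 ≤ q := Fintype.one_lt_card
  have h1 := card_subspaces_mul (𝔽 := 𝔽) (E := E) t (by omega)
  have h2 := card_subspaces_mul (𝔽 := 𝔽) (E := E) m (by omega)
  rw [hE] at h1 h2
  have key := prod_shift_id q m t
  have pos : 0 < (∏ i ∈ Finset.range t, (q ^ (t - i) - 1)) *
      ∏ i ∈ Finset.range m, (q ^ (m - i) - 1) :=
    Nat.mul_pos (gauss_den_pos hq2 t) (gauss_den_pos hq2 m)
  apply Nat.eq_of_mul_eq_mul_right pos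
  calc Nat.card {V : Submodule 𝔽 E // finrank 𝔽 V = t} *
        ((∏ i ∈ Finset.range t, (q ^ (t - i) - 1)) *
          ∏ i ∈ Finset.range m, (q ^ (m - i) - 1))
      = (Nat.card {V : Submodule 𝔽 E // finrank 𝔽 V = t} *
          ∏ i ∈ Finset.range t, (q ^ (t - i) - 1)) *
          ∏ i ∈ Finset.range m, (q ^ (m - i) - 1) := by ring
    _ = (∏ i ∈ Finset.range t, (q ^ (m + t - i) - 1)) *
          ∏ i ∈ Finset.range m, (q ^ (m - i) - 1) := by rw [h1]
    _ = (∏ i ∈ Finset.range m, (q ^ (m + t - i) - 1)) *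
          ∏ i ∈ Finset.range t, (q ^ (t - i) - 1) := key
    _ = (Nat.card {B : Submodule 𝔽 E // finrank 𝔽 B = m} *
          ∏ i ∈ Finset.range m, (q ^ (m - i) - 1)) *
          ∏ i ∈ Finset.range t, (q ^ (t - i) - 1) := by rw [h2]
    _ = _ := by ring

lemma exists_matching (m t : ℕ) (hE : finrank 𝔽 E = m + t) :
    ∃ f : {V : Submodule 𝔽 E // finrank 𝔽 V = t} → {B : Submodule 𝔽 E // finrank 𝔽 B = m},
      Function.Injective f ∧ (∀ V, V.1 ⊓ (f V).1 = ⊥) ∧ Function.Surjective f := by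
  classical
  have hq2 : 2 ≤ q := Fintype.one_lt_card
  haveI : Finite (Submodule 𝔽 E) := Finite.of_injective _ SetLike.coe_injective
  haveI : Fintype {V : Submodule 𝔽 E // finrank 𝔽 V = t} := Fintype.ofFinite _
  haveI : Fintype {B : Submodule 𝔽 E // finrank 𝔽 B = m} := Fintype.ofFinite _
  set tset : {V : Submodule 𝔽 E // finrank 𝔽 V = t} →
      Finset {B : Submodule 𝔽 E // finrank 𝔽 B = m} :=
    fun V => Finset.univ.filter (fun B => V.1 ⊓ B.1 = ⊥) with htset
  have degL : ∀ V, (tset V).card = q ^ (t * m) := by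
    intro V
    rw [htset]
    rw [← Fintype.card_subtype]
    rw [← Nat.card_eq_fintype_card]
    have eqv : {B : {B : Submodule 𝔽 E // finrank 𝔽 B = m} // V.1 ⊓ B.1 = ⊥} ≃
        {B : Submodule 𝔽 E // finrank 𝔽 B = m ∧ V.1 ⊓ B = ⊥} :=
      Equiv.subtypeSubtypeEquivSubtypeInter
        (fun B : Submodule 𝔽 E => finrank 𝔽 B = m) (fun B => V.1 ⊓ B = ⊥)
    rw [Nat.card_congr eqv]
    have := card_compl_deg (E := E) V.1 V.2
    rw [hE] at this
    have hmt : m + t - t = m := by omega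
    rw [hmt] at this
    rw [this]
  have degR : ∀ B : {B : Submodule 𝔽 E // finrank 𝔽 B = m},
      (Finset.univ.filter (fun V : {V : Submodule 𝔽 E // finrank 𝔽 V = t} =>
        V.1 ⊓ B.1 = ⊥)).card = q ^ (t * m) := by
    intro B
    rw [← Fintype.card_subtype, ← Nat.card_eq_fintype_card]
    have eqv : {V : {V : Submodule 𝔽 E // finrank 𝔽 V = t} // V.1 ⊓ B.1 = ⊥} ≃
        {V : Submodule 𝔽 E // finrank 𝔽 V = t ∧ B.1 ⊓ V = ⊥} := by
      refine (Equiv.subtypeSubtypeEquivSubtypeInter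
        (fun V : Submodule 𝔽 E => finrank 𝔽 V = t)
        (fun V => V ⊓ B.1 = ⊥)).trans (Equiv.subtypeEquiv (Equiv.refl _) ?_)
      intro V
      rw [Equiv.refl_apply, inf_comm]
    rw [Nat.card_congr eqv]
    have := card_compl_deg (E := E) B.1 B.2
    rw [hE] at this
    have hmt : m + t - m = t := by omega
    rw [hmt] at this
    rw [this, mul_comm]
  have hall : ∀ A : Finset {V : Submodule 𝔽 E // finrank 𝔽 V = t},
      A.card ≤ (A.biUnion tset).card := by
    intro A
    have hmul := Finset.card_mul_le_card_mul
      (fun V B => V.1 ⊓ B.1 = ⊥) (s := A) (t := A.biUnion tset)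
      (n := q ^ (t * m)) (m := q ^ (t * m)) ?_ ?_
    · have hpos : 0 < q ^ (t * m) := pow_pos (by omega) _
      exact Nat.le_of_mul_le_mul_right hmul hpos
    · intro V hV
      have : (A.biUnion tset).bipartiteAbove (fun V B => V.1 ⊓ B.1 = ⊥) V = tset V := by
        ext B
        rw [Finset.mem_bipartiteAbove]
        constructor
        · rintro ⟨-, h⟩
          rw [htset, Finset.mem_filter]
          exact ⟨Finset.mem_univ _, h⟩
        · intro hB
          have hB' : V.1 ⊓ B.1 = ⊥ := by
            rw [htset, Finset.mem_filter] at hB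
            exact hB.2
          exact ⟨Finset.mem_biUnion.2 ⟨V, hV, hB⟩, hB'⟩
      rw [this, degL V]
    · intro B hB
      calc (A.bipartiteBelow (fun V B => V.1 ⊓ B.1 = ⊥) B).card
          ≤ (Finset.univ.filter (fun V : {V : Submodule 𝔽 E // finrank 𝔽 V = t} =>
              V.1 ⊓ B.1 = ⊥)).card := by
            apply Finset.card_le_card
            intro V hV
            rw [Finset.mem_bipartiteBelow] at hV
            exact Finset.mem_filter.2 ⟨Finset.mem_univ _, hV.2⟩
        _ = q ^ (t * m) := degR B
  obtain ⟨f, hfinj, hfmem⟩ :=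
    (Finset.all_card_le_biUnion_card_iff_exists_injective tset).1 hall
  refine ⟨f, hfinj, fun V => ?_, ?_⟩
  · have := hfmem V
    rw [htset, Finset.mem_filter] at this
    exact this.2
  · exact ((Nat.bijective_iff_injective_and_card f).2
      ⟨hfinj, card_subspaces_symm m t hE⟩).surjective


lemma exists_row_matching (m t : ℕ) (W : Submodule 𝔽 E) (hW : finrank 𝔽 W = m + t) :
    ∃ f : {V : {V : Submodule 𝔽 E // finrank 𝔽 V = t} // V.1 ≤ W} →
        {B : Submodule 𝔽 E // finrank 𝔽 B = m},
      Function.Injective f ∧ (∀ x, (f x).1 ≤ W ∧ x.1.1 ⊓ (f x).1 = ⊥) ∧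
      (∀ B, B.1 ≤ W → ∃ x, f x = B) := by
  obtain ⟨g, hginj, hginf, hgsurj⟩ := exists_matching (E := ↥W) m t hW
  let eV : {V : {V : Submodule 𝔽 E // finrank 𝔽 V = t} // V.1 ≤ W} ≃
      {V' : Submodule 𝔽 ↥W // finrank 𝔽 V' = t} :=
    (Equiv.subtypeSubtypeEquivSubtypeInter
      (fun V : Submodule 𝔽 E => finrank 𝔽 V = t) (fun V => V ≤ W)).trans (subEquiv W t)
  let eB : {B : {B : Submodule 𝔽 E // finrank 𝔽 B = m} // B.1 ≤ W} ≃
      {B' : Submodule 𝔽 ↥W // finrank 𝔽 B' = m} :=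
    (Equiv.subtypeSubtypeEquivSubtypeInter
      (fun B : Submodule 𝔽 E => finrank 𝔽 B = m) (fun B => B ≤ W)).trans (subEquiv W m)
  have heV : ∀ x, (eV x).1 = Submodule.comap W.subtype x.1.1 := fun x => rfl
  have heB : ∀ y, (eB.symm y).1.1 = Submodule.map W.subtype y.1 := fun y => rfl
  have hmapV : ∀ x : {V : {V : Submodule 𝔽 E // finrank 𝔽 V = t} // V.1 ≤ W},
      Submodule.map W.subtype (eV x).1 = x.1.1 := by
    intro x
    rw [heV, Submodule.map_comap_subtype]
    exact inf_eq_right.2 x.2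
  refine ⟨fun x => (eB.symm (g (eV x))).1, ?_, ?_, ?_⟩
  · intro x y hxy
    exact eV.injective (hginj (eB.symm.injective (Subtype.ext hxy)))
  · intro x
    refine ⟨(eB.symm (g (eV x))).2, ?_⟩
    calc x.1.1 ⊓ (eB.symm (g (eV x))).1.1
        = Submodule.map W.subtype (eV x).1 ⊓ Submodule.map W.subtype (g (eV x)).1 := by
          rw [hmapV, heB]
      _ = Submodule.map W.subtype ((eV x).1 ⊓ (g (eV x)).1) :=
          (Submodule.map_inf _ W.injective_subtype).symm
      _ = ⊥ := by rw [hginf (eV x), Submodule.map_bot]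
  · intro B hBW
    obtain ⟨V', hgV'⟩ := hgsurj (eB ⟨B, hBW⟩)
    refine ⟨eV.symm V', ?_⟩
    have h5 : eB.symm (g (eV (eV.symm V'))) = ⟨B, hBW⟩ := by
      rw [Equiv.apply_symm_apply, hgV', Equiv.symm_apply_apply]
    exact congrArg (fun z => z.1) h5

end

lemma existsPDA_of (R C S' : Type) [Finite R] [Finite C] [Finite S'] {K F Q S : ℕ}
    (hR : Nat.card R = F) (hC : Nat.card C = K) (hS : Nat.card S' = S)
    (p : R → C → Option S')
    (h1 : ∀ c, Nat.card {r : R // p r c = none} = Q)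
    (h2 : ∀ s : S', ∃ r c, p r c = some s)
    (h3 : ∀ r₁ r₂ c₁ c₂ s, (r₁, c₁) ≠ (r₂, c₂) → p r₁ c₁ = some s → p r₂ c₂ = some s →
      r₁ ≠ r₂ ∧ c₁ ≠ c₂ ∧ p r₁ c₂ = none ∧ p r₂ c₁ = none) :
    ExistsPDA K F Q S := by
  classical
  haveI : Fintype R := Fintype.ofFinite _
  haveI : Fintype C := Fintype.ofFinite _
  haveI : Fintype S' := Fintype.ofFinite _
  have eR : R ≃ Fin F := Fintype.equivFinOfCardEq (by rw [← Nat.card_eq_fintype_card, hR])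
  have eC : C ≃ Fin K := Fintype.equivFinOfCardEq (by rw [← Nat.card_eq_fintype_card, hC])
  have eS : S' ≃ Fin S := Fintype.equivFinOfCardEq (by rw [← Nat.card_eq_fintype_card, hS])
  refine ⟨fun j k' => (p (eR.symm j) (eC.symm k')).map eS, ?_, ?_, ?_⟩
  · intro k'
    rw [← Fintype.card_subtype, ← Nat.card_eq_fintype_card]
    have e1 : {j : Fin F // (p (eR.symm j) (eC.symm k')).map eS = none} ≃
        {r : R // p r (eC.symm k') = none} := by
      refine (Equiv.subtypeEquiv eR.symm (fun j => ?_))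
      rw [Option.map_eq_none_iff]
    rw [Nat.card_congr e1, h1]
  · intro s
    obtain ⟨r, c, h⟩ := h2 (eS.symm s)
    exact ⟨eR r, eC c, by simp [h]⟩
  · intro j₁ j₂ k₁ k₂ s hne hp1 hp2
    obtain ⟨a₁, ha₁, hae₁⟩ := Option.map_eq_some_iff.1 hp1
    obtain ⟨a₂, ha₂, hae₂⟩ := Option.map_eq_some_iff.1 hp2
    have ha12 : a₁ = a₂ := eS.injective (hae₁.trans hae₂.symm)
    subst ha12
    have hne' : (eR.symm j₁, eC.symm k₁) ≠ (eR.symm j₂, eC.symm k₂) := by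
      intro h
      apply hne
      have h1' := congrArg Prod.fst h
      have h2' := congrArg Prod.snd h
      simp only at h1' h2'
      rw [Prod.ext_iff]
      exact ⟨eR.symm.injective h1', eC.symm.injective h2'⟩
    obtain ⟨hr, hc, hn1, hn2⟩ := h3 _ _ _ _ _ hne' ha₁ ha₂
    refine ⟨fun h => hr (by rw [h]), fun h => hc (by rw [h]), ?_, ?_⟩
    · show (p (eR.symm j₁) (eC.symm k₂)).map eS = none
      rw [hn1]; rfl
    · show (p (eR.symm j₂) (eC.symm k₁)).map eS = none
      rw [hn2]; rfl

/-- Projective-geometry construction, parameter set 2: for a prime power `q` and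
positive integers `k, m, t` with `m + t ≤ k`, there is a PDA with `K = [k,t]_q`,
`F = [k,m+t]_q`, `Q = [k,m+t]_q - [k-t,m]_q`, `S = [k,m]_q`. -/
theorem exists_pda_projective_two (q k m t : ℕ) (hq : IsPrimePow q)
    (hk : 0 < k) (hm : 0 < m) (ht : 0 < t) (hmt : m + t ≤ k) :
    ExistsPDA (gaussBinom q k t) (gaussBinom q k (m + t))
      (gaussBinom q k (m + t) - gaussBinom q (k - t) m) (gaussBinom q k m) := by
  classical
  obtain ⟨p, e, hp, he, rfl⟩ := hq
  haveI : Fact (Nat.Prime p) := ⟨hp.nat_prime⟩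
  set 𝔽 := GaloisField p e with h𝔽
  haveI : Fintype 𝔽 := Fintype.ofFinite _
  have hq2 : 2 ≤ Fintype.card 𝔽 := Fintype.one_lt_card
  have hcard : Fintype.card 𝔽 = p ^ e := by
    rw [← Nat.card_eq_fintype_card]
    exact GaloisField.card p e he.ne'
  set E := (Fin k → 𝔽) with hE
  have hN : finrank 𝔽 E = k := Module.finrank_fin_fun 𝔽
  haveI : Finite (Submodule 𝔽 E) := Finite.of_injective _ SetLike.coe_injective
  have hmatch : ∀ Wr : {W : Submodule 𝔽 E // finrank 𝔽 W = m + t},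
      ∃ f : {V : {V : Submodule 𝔽 E // finrank 𝔽 V = t} // V.1 ≤ Wr.1} →
          {B : Submodule 𝔽 E // finrank 𝔽 B = m},
        Function.Injective f ∧ (∀ x, (f x).1 ≤ Wr.1 ∧ x.1.1 ⊓ (f x).1 = ⊥) ∧
        (∀ B, B.1 ≤ Wr.1 → ∃ x, f x = B) :=
    fun Wr => exists_row_matching m t Wr.1 Wr.2
  choose fW hfinj hfprop hfsurj using hmatch
  set Pfun : {W : Submodule 𝔽 E // finrank 𝔽 W = m + t} →
      {V : Submodule 𝔽 E // finrank 𝔽 V = t} →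
      Option {B : Submodule 𝔽 E // finrank 𝔽 B = m} :=
    fun Wr V => if h : V.1 ≤ Wr.1 then some (fW Wr ⟨V, h⟩) else none with hPfun
  have hPsome : ∀ Wr V B, Pfun Wr V = some B → ∃ h : V.1 ≤ Wr.1, fW Wr ⟨V, h⟩ = B := by
    intro Wr V B hPB
    by_cases h : V.1 ≤ Wr.1
    · refine ⟨h, ?_⟩
      rw [hPfun] at hPB
      simp only [dif_pos h] at hPB
      exact Option.some_injective _ hPB
    · rw [hPfun] at hPB
      simp [dif_neg h] at hPB
  have hPnone : ∀ Wr V, ¬ V.1 ≤ Wr.1 → Pfun Wr V = none := by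
    intro Wr V h
    rw [hPfun]
    simp [dif_neg h]
  have hsup : ∀ Wr V B, Pfun Wr V = some B → V.1 ⊔ B.1 = Wr.1 ∧ B.1 ≤ Wr.1 := by
    intro Wr V B hPB
    obtain ⟨h, rfl⟩ := hPsome Wr V B hPB
    obtain ⟨hBW, hinf⟩ := hfprop Wr ⟨V, h⟩
    refine ⟨?_, hBW⟩
    apply Submodule.eq_of_le_of_finrank_eq (sup_le h hBW)
    rw [finrank_sup_of_inf_bot hinf, V.2, (fW Wr ⟨V, h⟩).2, Wr.2]
    omega
  have hkey : ∀ W₁ W₂ V₁ V₂ B, Pfun W₁ V₁ = some B → Pfun W₂ V₂ = some B →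
      V₁.1 ≤ W₂.1 → W₁ = W₂ ∧ V₁ = V₂ := by
    intro W₁ W₂ V₁ V₂ B h1 h2 hle
    obtain ⟨hsup1, hB1⟩ := hsup W₁ V₁ B h1
    obtain ⟨hsup2, hB2⟩ := hsup W₂ V₂ B h2
    have hWle : W₁.1 ≤ W₂.1 := by
      rw [← hsup1]
      exact sup_le hle hB2
    have hW : W₁ = W₂ := by
      apply Subtype.ext
      apply Submodule.eq_of_le_of_finrank_eq hWle
      rw [W₁.2, W₂.2]
    subst hW
    obtain ⟨hc1, he1⟩ := hPsome W₁ V₁ B h1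
    obtain ⟨hc2, he2⟩ := hPsome W₁ V₂ B h2
    have := hfinj W₁ (he1.trans he2.symm)
    exact ⟨rfl, congrArg (fun z => z.1) this⟩
  apply existsPDA_of {W : Submodule 𝔽 E // finrank 𝔽 W = m + t}
    {V : Submodule 𝔽 E // finrank 𝔽 V = t} {B : Submodule 𝔽 E // finrank 𝔽 B = m}
    (F := gaussBinom (p ^ e) k (m + t)) (K := gaussBinom (p ^ e) k t)
    (S := gaussBinom (p ^ e) k m) ?_ ?_ ?_ Pfun ?_ ?_ ?_
  · have h := card_subspaces_eq_gauss (𝔽 := 𝔽) (E := E) (m + t) (by rw [hN]; omega)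
    rwa [hN, hcard] at h
  · have h := card_subspaces_eq_gauss (𝔽 := 𝔽) (E := E) t (by rw [hN]; omega)
    rwa [hN, hcard] at h
  · have h := card_subspaces_eq_gauss (𝔽 := 𝔽) (E := E) m (by rw [hN]; omega)
    rwa [hN, hcard] at h
  · -- C1
    intro V
    have e1 : {Wr : {W : Submodule 𝔽 E // finrank 𝔽 W = m + t} // Pfun Wr V = none} ≃
        {Wr : {W : Submodule 𝔽 E // finrank 𝔽 W = m + t} // ¬ V.1 ≤ Wr.1} := by
      refine Equiv.subtypeEquivRight (fun Wr => ?_)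
      constructor
      · intro hnone hle
        obtain ⟨h, -⟩ := hPsome Wr V (fW Wr ⟨V, hle⟩) (by rw [hPfun]; simp [dif_pos hle])
        rw [hPfun] at hnone
        simp [dif_pos hle] at hnone
      · exact hPnone Wr V
    haveI : Fintype {W : Submodule 𝔽 E // finrank 𝔽 W = m + t} := Fintype.ofFinite _
    rw [Nat.card_congr e1, Nat.card_eq_fintype_card, Fintype.card_subtype_compl]
    have hRow : Fintype.card {W : Submodule 𝔽 E // finrank 𝔽 W = m + t} =
        gaussBinom (p ^ e) k (m + t) := by
      rw [← Nat.card_eq_fintype_card]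
      have h := card_subspaces_eq_gauss (𝔽 := 𝔽) (E := E) (m + t) (by rw [hN]; omega)
      rwa [hN, hcard] at h
    have hup : Fintype.card {Wr : {W : Submodule 𝔽 E // finrank 𝔽 W = m + t} // V.1 ≤ Wr.1} =
        gaussBinom (p ^ e) (k - t) m := by
      rw [← Nat.card_eq_fintype_card]
      have e2 : {Wr : {W : Submodule 𝔽 E // finrank 𝔽 W = m + t} // V.1 ≤ Wr.1} ≃
          {W : Submodule 𝔽 E // finrank 𝔽 W = m + t ∧ V.1 ≤ W} :=
        Equiv.subtypeSubtypeEquivSubtypeInter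
          (fun W : Submodule 𝔽 E => finrank 𝔽 W = m + t) (fun W => V.1 ≤ W)
      rw [Nat.card_congr e2]
      have h := card_sup_eq (𝔽 := 𝔽) (E := E) V.1 (m + t) (by rw [V.2]; omega)
        (by rw [hN]; omega)
      rw [hN, hcard, V.2] at h
      rw [h]
      congr 1
      omega
    rw [hRow, hup]
  · -- C2
    intro B
    obtain ⟨W₀, hBW₀, hrk⟩ := exists_supmodule B.1 (m + t) (by rw [B.2]; omega)
      (by rw [hN]; omega)
    obtain ⟨x, hx⟩ := hfsurj ⟨W₀, hrk⟩ B hBW₀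
    refine ⟨⟨W₀, hrk⟩, x.1, ?_⟩
    rw [hPfun]
    simp only [dif_pos x.2]
    rw [← hx]
  · -- C3
    intro W₁ W₂ V₁ V₂ B hne h1 h2
    have h12 : ¬ V₁.1 ≤ W₂.1 := by
      intro hle
      obtain ⟨hW, hV⟩ := hkey W₁ W₂ V₁ V₂ B h1 h2 hle
      exact hne (by rw [hW, hV])
    have h21 : ¬ V₂.1 ≤ W₁.1 := by
      intro hle
      obtain ⟨hW, hV⟩ := hkey W₂ W₁ V₂ V₁ B h2 h1 hle
      exact hne (by rw [hW, hV])
    obtain ⟨hc1, -⟩ := hPsome W₁ V₁ B h1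
    obtain ⟨hc2, -⟩ := hPsome W₂ V₂ B h2
    refine ⟨?_, ?_, hPnone W₁ V₂ h21, hPnone W₂ V₁ h12⟩
    · intro h
      exact h12 (h ▸ hc1)
    · intro h
      exact h12 (h ▸ hc2)
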